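/- For any positive function ω : [1,∞) → (0,∞) tending to infinity, there exists a slowly decreasing (indeed nondecreasing) function q on [1,∞) with q(x) = O(x·ω(x)) as x → ∞, such that q(x)/x is not boundedly decreasing, i.e., ν̄(q(x)/x; λ) = ∞ for all λ > 1. -/

import Mathlib

/-!
Choose an integer step function `s`, nondecreasing and unbounded but growing so slowly that
`s n ≤ ω x` once `x ≥ eⁿ`, and put `q(x) = e^⌊log x⌋ s(⌊log x⌋)`. Then `q` is nondecreasing and
`q(x) ≤ x ω(x)`. On a block `[eⁿ, eⁿ⁺¹)` the quotient `q(x)/x = eⁿ s(n)/x` falls from `s(n)` to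
`s(n)/μ` between `eⁿ` and `μ eⁿ`, a drop of `s(n)(1 - 1/μ)` that is unbounded in `n`.
-/

open Set Filter

/-- The extended-real quantity ν̄(f;λ) = -inf{f(y)-f(x) : 1 ≤ x ≤ y ≤ λx}. -/
noncomputable def nubar (f : ℝ → ℝ) (lam : ℝ) : EReal :=
  - sInf ((fun p : ℝ × ℝ => ((f p.2 - f p.1 : ℝ) : EReal)) ''
      {p : ℝ × ℝ | 1 ≤ p.1 ∧ p.1 ≤ p.2 ∧ p.2 ≤ lam * p.1})

/-- `f` is slowly decreasing on `[a,∞)`. -/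
def SlowlyDecreasingOn (f : ℝ → ℝ) (a : ℝ) : Prop :=
  ∀ ε : ℝ, 0 < ε → ∃ lam : ℝ, 1 < lam ∧ ∃ X : ℝ, a ≤ X ∧
    ∀ x y : ℝ, X ≤ x → x ≤ y → y ≤ lam * x → f y - f x ≥ -ε

open Real

theorem exists_monotone_tendsto_atTop_natCast_le (ω : ℝ → ℝ) (hω : Tendsto ω atTop atTop)
    (t : ℕ → ℝ) (ht : Monotone t) (ht_top : Tendsto t atTop atTop) :
    ∃ s : ℕ → ℕ, Monotone s ∧ Tendsto s atTop atTop ∧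
      ∀ᶠ x in atTop, ∀ n, t n ≤ x → (s n : ℝ) ≤ ω x := by
  classical
  let P : ℕ → ℕ → Prop := fun n k => ∀ x, t n ≤ x → (k : ℝ) ≤ ω x
  have hP_mono : ∀ {n m}, n ≤ m → ∀ k, P n k → P m k :=
    fun hnm _ hk x hx => hk x ((ht hnm).trans hx)
  have hs_mono : Monotone fun n => Nat.findGreatest (P n) n :=
    fun _ _ hnm => Nat.findGreatest_mono (hP_mono hnm) hnm
  refine ⟨fun n => Nat.findGreatest (P n) n, hs_mono,
    tendsto_atTop_atTop_of_monotone hs_mono fun k => ?_, ?_⟩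
  · obtain ⟨B, hB⟩ := eventually_atTop.1 (hω.eventually_ge_atTop (k : ℝ))
    obtain ⟨N, hN⟩ := eventually_atTop.1 (ht_top.eventually_ge_atTop B)
    exact ⟨max N k, Nat.le_findGreatest (le_max_right N k)
      fun x hx => hB x ((hN _ (le_max_left N k)).trans hx)⟩
  · filter_upwards [hω.eventually_ge_atTop 0] with x hx n hn
    by_cases h0 : Nat.findGreatest (P n) n = 0
    · simpa [h0] using hx
    · exact Nat.findGreatest_of_ne_zero rfl h0 x hn

theorem MonotoneOn.slowlyDecreasingOn {f : ℝ → ℝ} {a : ℝ} (hf : MonotoneOn f (Ici a)) :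
    SlowlyDecreasingOn f a :=
  fun _ _ => ⟨2, one_lt_two, a, le_rfl, fun x y hx hxy _ => by
    linarith [hf (mem_Ici.2 hx) (mem_Ici.2 (hx.trans hxy)) hxy]⟩

theorem nubar_eq_top_of_forall_exists_sub_lt {f : ℝ → ℝ} {lam : ℝ}
    (h : ∀ c : ℝ, ∃ x y, 1 ≤ x ∧ x ≤ y ∧ y ≤ lam * x ∧ f y - f x < c) :
    nubar f lam = ⊤ := by
  rw [nubar, EReal.neg_eq_top_iff, EReal.eq_bot_iff_forall_lt]
  intro c
  obtain ⟨x, y, hx, hxy, hy, hlt⟩ := h c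
  refine lt_of_le_of_lt (sInf_le ?_) (EReal.coe_lt_coe_iff.2 hlt)
  exact ⟨(x, y), ⟨hx, hxy, hy⟩, rfl⟩

theorem exp_natFloor_log_le {x : ℝ} (hx : 1 ≤ x) : exp ⌊log x⌋₊ ≤ x := by
  calc exp ⌊log x⌋₊ ≤ exp (log x) := exp_le_exp.2 (Nat.floor_le (log_nonneg hx))
    _ = x := exp_log (by linarith)

theorem natFloor_log_mul_exp {μ : ℝ} (hμ : 1 ≤ μ) (hμe : μ < exp 1) (n : ℕ) :
    ⌊log (μ * exp n)⌋₊ = n := by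
  have hlog : log μ < 1 := by simpa using log_lt_log (by linarith) hμe
  have hlog0 : 0 ≤ log μ := log_nonneg hμ
  rw [log_mul (by linarith) (exp_ne_zero _), log_exp, Nat.floor_eq_iff (by positivity)]
  constructor <;> linarith

noncomputable def expFloorStep (s : ℕ → ℕ) (x : ℝ) : ℝ :=
  exp ⌊log x⌋₊ * s ⌊log x⌋₊

section expFloorStep

variable {s : ℕ → ℕ}

theorem monotoneOn_expFloorStep (hs : Monotone s) : MonotoneOn (expFloorStep s) (Ioi 0) := by
  intro x hx y _ hxy
  have hn : ⌊log x⌋₊ ≤ ⌊log y⌋₊ := Nat.floor_le_floor (log_le_log hx hxy)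
  exact mul_le_mul (exp_le_exp.2 (by exact_mod_cast hn)) (by exact_mod_cast hs hn)
    (Nat.cast_nonneg _) (exp_nonneg _)

theorem expFloorStep_le {x : ℝ} (hx : 1 ≤ x) : expFloorStep s x ≤ x * s ⌊log x⌋₊ :=
  mul_le_mul_of_nonneg_right (exp_natFloor_log_le hx) (Nat.cast_nonneg _)

theorem expFloorStep_mul_exp_div {μ : ℝ} (hμ : 1 ≤ μ) (hμe : μ < exp 1) (n : ℕ) :
    expFloorStep s (μ * exp n) / (μ * exp n) = s n / μ := by
  rw [expFloorStep, natFloor_log_mul_exp hμ hμe, mul_comm μ, mul_div_mul_left _ _ (exp_ne_zero _)]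

theorem nubar_expFloorStep_div_eq_top (hs : Tendsto s atTop atTop) {lam : ℝ} (hlam : 1 < lam) :
    nubar (fun x => expFloorStep s x / x) lam = ⊤ := by
  -- `μ < e` keeps `eⁿ` and `μ eⁿ` in the same block.
  set μ := min lam 2
  have hμ : 1 < μ := lt_min hlam one_lt_two
  have hμe : μ < exp 1 := (min_le_right _ _).trans_lt (by linarith [exp_one_gt_d9])
  have hdrop : Tendsto (fun n => (s n : ℝ) * (1 - μ⁻¹)) atTop atTop :=
    (tendsto_natCast_atTop_atTop.comp hs).atTop_mul_const
      (sub_pos.2 (inv_lt_one_of_one_lt₀ hμ))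
  refine nubar_eq_top_of_forall_exists_sub_lt fun c => ?_
  obtain ⟨n, hn⟩ := (hdrop.eventually_gt_atTop (-c)).exists
  refine ⟨exp n, μ * exp n, one_le_exp (Nat.cast_nonneg n),
    le_mul_of_one_le_left (exp_nonneg _) hμ.le,
    mul_le_mul_of_nonneg_right (min_le_left _ _) (exp_nonneg _), ?_⟩
  have h_at_exp := expFloorStep_mul_exp_div (s := s) le_rfl (one_lt_exp_iff.2 one_pos) n
  rw [one_mul, div_one] at h_at_exp
  rw [h_at_exp, expFloorStep_mul_exp_div hμ.le hμe n, div_eq_mul_inv]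
  linarith

end expFloorStep

theorem exists_slowlyDecreasing_not_boundedlyDecreasing_general
    (ω : ℝ → ℝ)
    (hω_top : Filter.Tendsto ω Filter.atTop Filter.atTop) :
    ∃ q : ℝ → ℝ, MonotoneOn q (Ici (1 : ℝ)) ∧ SlowlyDecreasingOn q 1 ∧
      (∃ K X : ℝ, ∀ x, X ≤ x → q x ≤ K * (x * ω x)) ∧
      (∀ lam : ℝ, 1 < lam → nubar (fun x => q x / x) lam = ⊤) := by
  obtain ⟨s, hs_mono, hs_top, hs_le⟩ := exists_monotone_tendsto_atTop_natCast_le ω hω_top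
    (fun n => exp n) (fun _ _ h => exp_le_exp.2 (Nat.cast_le.2 h))
    (tendsto_exp_atTop.comp tendsto_natCast_atTop_atTop)
  have hq_mono : MonotoneOn (expFloorStep s) (Ici 1) :=
    (monotoneOn_expFloorStep hs_mono).mono fun x (hx : 1 ≤ x) => zero_lt_one.trans_le hx
  obtain ⟨X, hX⟩ := eventually_atTop.1 (hs_le.and (eventually_ge_atTop 1))
  refine ⟨expFloorStep s, hq_mono, hq_mono.slowlyDecreasingOn, ⟨1, X, fun x hx => ?_⟩,
    fun lam hlam => nubar_expFloorStep_div_eq_top hs_top hlam⟩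
  obtain ⟨hsx, hx1⟩ := hX x hx
  rw [one_mul]
  exact (expFloorStep_le hx1).trans (mul_le_mul_of_nonneg_left
    (hsx _ (exp_natFloor_log_le hx1)) (by linarith))

theorem exists_slowlyDecreasing_not_boundedlyDecreasing
    (ω : ℝ → ℝ) (hω_pos : ∀ x, 1 ≤ x → 0 < ω x)
    (hω_top : Filter.Tendsto ω Filter.atTop Filter.atTop) :
    ∃ q : ℝ → ℝ, MonotoneOn q (Ici (1 : ℝ)) ∧ SlowlyDecreasingOn q 1 ∧
      (∃ K X : ℝ, ∀ x, X ≤ x → q x ≤ K * (x * ω x)) ∧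
      (∀ lam : ℝ, 1 < lam → nubar (fun x => q x / x) lam = ⊤) :=
  exists_slowlyDecreasing_not_boundedlyDecreasing_general ω hω_top
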